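/- arXiv:0802.0098 — 3 statements merged into one kernel-verified Lean document; each statement's English description precedes it below -/
import Mathlib

section
/- Let ξ₁,…,ξₙ be an ε-orthonormal basis of ℝⁿ with ε < 1/(2n), and let L : ℝⁿ → ℝⁿ be a linear map with ‖L ξᵢ‖ < δ for all i = 1,…,n. Then the operator norm of L satisfies ‖L‖ < 2√n · δ. -/
open scoped RealInnerProductSpace

theorem stmt1 (n : ℕ) (hn : 0 < n) (ε δ : ℝ) (hε : 0 < ε) (hεn : ε < 1 / (2 * n))
    (hδ : 0 < δ)
    (ξ : Fin n → EuclideanSpace ℝ (Fin n))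
    (horth : ∀ i j, |⟪ξ i, ξ j⟫ - (if i = j then (1:ℝ) else 0)| < ε)
    (L : EuclideanSpace ℝ (Fin n) →L[ℝ] EuclideanSpace ℝ (Fin n))
    (hL : ∀ i, ‖L (ξ i)‖ < δ) :
    ‖L‖ < 2 * Real.sqrt n * δ := by
  classical
  have hn' : (0:ℝ) < n := by exact_mod_cast hn
  have hnε : (n:ℝ) * ε < 1/2 := by
    calc (n:ℝ) * ε < n * (1/(2*n)) := by exact mul_lt_mul_of_pos_left hεn hn'
      _ = 1/2 := by field_simp
  have hhalf : (1:ℝ)/2 < 1 - n*ε := by linarith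
  have normsq : ∀ x : EuclideanSpace ℝ (Fin n), ‖x‖^2 = ∑ i, x i ^ 2 := by
    intro x
    rw [EuclideanSpace.norm_eq, Real.sq_sqrt (by positivity)]
    simp [sq, Real.norm_eq_abs, abs_mul_abs_self]
  let T : EuclideanSpace ℝ (Fin n) →ₗ[ℝ] EuclideanSpace ℝ (Fin n) :=
    { toFun := fun x => ∑ i, x i • ξ i
      map_add' := by intro x y; simp [add_smul, Finset.sum_add_distrib]
      map_smul' := by intro c x; simp [smul_smul, Finset.smul_sum] }
  have hTapp : ∀ x, T x = ∑ i, x i • ξ i := fun _ => rfl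
  have expand : ∀ x : EuclideanSpace ℝ (Fin n),
      ‖T x‖^2 = ∑ i, ∑ j, x i * x j * ⟪ξ i, ξ j⟫ := by
    intro x
    rw [← real_inner_self_eq_norm_sq, hTapp, sum_inner]
    refine Finset.sum_congr rfl fun i _ => ?_
    rw [real_inner_smul_left, inner_sum, Finset.mul_sum]
    refine Finset.sum_congr rfl fun j _ => ?_
    rw [real_inner_smul_right]; ring
  have hcs : ∀ x : EuclideanSpace ℝ (Fin n), (∑ i, |x i|)^2 ≤ n * ‖x‖^2 := by
    intro x
    rw [normsq]
    have := sq_sum_le_card_mul_sum_sq (s := Finset.univ) (f := fun i : Fin n => |x i|)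
    simpa [sq_abs] using this
  have hA : ∀ x : EuclideanSpace ℝ (Fin n), (1 - n*ε) * ‖x‖^2 ≤ ‖T x‖^2 := by
    intro x
    rw [expand]
    have h1 : ∀ i, (x i)^2 = ∑ j, x i * x j * (if i = j then (1:ℝ) else 0) := by
      intro i
      rw [Finset.sum_eq_single i]
      · simp [sq]
      · intro j _ hji; simp [Ne.symm hji]
      · simp
    have hsplit : ∑ i, ∑ j, x i * x j * ⟪ξ i, ξ j⟫
        = (∑ i, x i ^ 2) + ∑ i, ∑ j, x i * x j * (⟪ξ i, ξ j⟫ - if i = j then 1 else 0) := by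
      rw [← Finset.sum_add_distrib]
      refine Finset.sum_congr rfl fun i _ => ?_
      rw [h1 i, ← Finset.sum_add_distrib]
      refine Finset.sum_congr rfl fun j _ => ?_
      ring
    have hbound : |∑ i, ∑ j, x i * x j * (⟪ξ i, ξ j⟫ - if i = j then 1 else 0)|
        ≤ ε * (∑ i, |x i|)^2 := by
      calc |∑ i, ∑ j, x i * x j * (⟪ξ i, ξ j⟫ - if i = j then 1 else 0)|
          ≤ ∑ i, ∑ j, |x i * x j * (⟪ξ i, ξ j⟫ - if i = j then 1 else 0)| :=
            (Finset.abs_sum_le_sum_abs _ _).trans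
              (Finset.sum_le_sum fun i _ => Finset.abs_sum_le_sum_abs _ _)
        _ ≤ ∑ i, ∑ j, |x i| * |x j| * ε := by
            refine Finset.sum_le_sum fun i _ => Finset.sum_le_sum fun j _ => ?_
            rw [abs_mul, abs_mul]
            exact mul_le_mul_of_nonneg_left (le_of_lt (horth i j)) (by positivity)
        _ = ε * (∑ i, |x i|)^2 := by
            rw [sq, Finset.sum_mul_sum, Finset.mul_sum]
            refine Finset.sum_congr rfl fun i _ => ?_
            rw [Finset.mul_sum]
            exact Finset.sum_congr rfl fun j _ => by ring
    have hb2 : ε * (∑ i, |x i|)^2 ≤ ε * (n * ‖x‖^2) :=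
      mul_le_mul_of_nonneg_left (hcs x) hε.le
    have hge : -(ε * (n * ‖x‖^2)) ≤ ∑ i, ∑ j, x i * x j * (⟪ξ i, ξ j⟫ - if i = j then 1 else 0) := by
      have := neg_abs_le (∑ i, ∑ j, x i * x j * (⟪ξ i, ξ j⟫ - if i = j then 1 else 0))
      linarith [hbound, hb2, this]
    rw [hsplit, ← normsq]
    nlinarith [hge]
  have hinj : Function.Injective T := by
    rw [← LinearMap.ker_eq_bot, LinearMap.ker_eq_bot']
    intro x hx
    have h := hA x
    rw [hx, norm_zero] at h
    have hx0 : ‖x‖ = 0 := by nlinarith [norm_nonneg x, sq_nonneg ‖x‖]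
    exact norm_eq_zero.mp hx0
  have hsurj : Function.Surjective T := LinearMap.injective_iff_surjective.mp hinj
  have hB : ∀ x : EuclideanSpace ℝ (Fin n), ‖L (T x)‖ ≤ Real.sqrt n * δ * ‖x‖ := by
    intro x
    have h1 : ‖L (T x)‖ ≤ ∑ i, |x i| * δ := by
      rw [hTapp, map_sum]
      refine (norm_sum_le _ _).trans (Finset.sum_le_sum fun i _ => ?_)
      rw [map_smul, norm_smul, Real.norm_eq_abs]
      exact mul_le_mul_of_nonneg_left (le_of_lt (hL i)) (abs_nonneg _)
    have h2 : ∑ i, |x i| ≤ Real.sqrt n * ‖x‖ := by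
      have hc := hcs x
      have hr : (Real.sqrt n * ‖x‖)^2 = n * ‖x‖^2 := by
        rw [mul_pow, Real.sq_sqrt hn'.le]
      nlinarith [Finset.sum_nonneg (s := Finset.univ) (fun i (_ : i ∈ Finset.univ) => abs_nonneg (x i)),
        mul_nonneg (Real.sqrt_nonneg (n:ℝ)) (norm_nonneg x)]
    calc ‖L (T x)‖ ≤ ∑ i, |x i| * δ := h1
      _ = (∑ i, |x i|) * δ := by rw [Finset.sum_mul]
      _ ≤ (Real.sqrt n * ‖x‖) * δ := mul_le_mul_of_nonneg_right h2 hδ.le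
      _ = Real.sqrt n * δ * ‖x‖ := by ring
  have hmain : ‖L‖ ≤ Real.sqrt 2 * (Real.sqrt n * δ) := by
    refine L.opNorm_le_bound (by positivity) ?_
    intro y
    obtain ⟨x, rfl⟩ := hsurj y
    have h1 := hA x
    have h0 : ‖x‖^2 ≤ 2 * ‖T x‖^2 := by nlinarith [sq_nonneg ‖x‖]
    have hxle : ‖x‖ ≤ Real.sqrt 2 * ‖T x‖ := by
      calc ‖x‖ = Real.sqrt (‖x‖^2) := (Real.sqrt_sq (norm_nonneg x)).symm
        _ ≤ Real.sqrt (2 * ‖T x‖^2) := Real.sqrt_le_sqrt h0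
        _ = Real.sqrt 2 * ‖T x‖ := by
            rw [Real.sqrt_mul (by norm_num), Real.sqrt_sq (norm_nonneg _)]
    calc ‖L (T x)‖ ≤ Real.sqrt n * δ * ‖x‖ := hB x
      _ ≤ Real.sqrt n * δ * (Real.sqrt 2 * ‖T x‖) :=
          mul_le_mul_of_nonneg_left hxle (by positivity)
      _ = Real.sqrt 2 * (Real.sqrt n * δ) * ‖T x‖ := by ring
  have hs2 : Real.sqrt 2 < 2 := by
    nlinarith [Real.sq_sqrt (by norm_num : (0:ℝ) ≤ 2), Real.sqrt_nonneg 2]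
  have hs : 0 < Real.sqrt n * δ := mul_pos (Real.sqrt_pos.mpr hn') hδ
  calc ‖L‖ ≤ Real.sqrt 2 * (Real.sqrt n * δ) := hmain
    _ < 2 * (Real.sqrt n * δ) := by nlinarith
    _ = 2 * Real.sqrt n * δ := by ring
end

section
/- Let ξ₁,…,ξₙ be an ε-orthonormal basis of ℝⁿ with ε < 1/(2n), and let L : ℝⁿ → ℝⁿ be linear with |⟨Lξᵢ, Lξⱼ⟩ − ⟨ξᵢ, ξⱼ⟩| < δ for all i,j, where 8n√n·δ < 1. Then there exists a linear isometry Q : ℝⁿ → ℝⁿ with ‖L − Q‖ < 8n√n·δ. -/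
/-! In coordinates `v = ∑ cᵢ ξᵢ`, both `‖v‖² - ∑ cᵢ²` and `‖L v‖² - ‖v‖²` are double sums
`∑ cᵢ cⱼ aᵢⱼ` with small `aᵢⱼ`, bounded through `(∑ |cᵢ|)² ≤ n ∑ cᵢ²`; this gives
`|‖L v‖² - ‖v‖²| ≤ 2 n δ ‖v‖²`. Diagonalising `L* L` in an orthonormal basis `eᵢ` with
eigenvalues `μᵢ` then forces `|μᵢ - 1| ≤ 2 n δ < 1`, and the isometry `Q eᵢ = L eᵢ / √μᵢ` satisfies
`(L - Q) eᵢ = (√μᵢ - 1) Q eᵢ`, whence `‖L - Q‖ ≤ max |√μᵢ - 1| ≤ 2 n δ < 8 n √n δ`. -/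

open scoped RealInnerProductSpace

open Finset Module

section AlmostOrthonormal

variable {ι E F : Type*} [Fintype ι] [NormedAddCommGroup E] [InnerProductSpace ℝ E]
  [NormedAddCommGroup F] [InnerProductSpace ℝ F]

theorem norm_sum_smul_sq (v : ι → E) (c : ι → ℝ) :
    ‖∑ i, c i • v i‖ ^ 2 = ∑ i, ∑ j, c i * c j * ⟪v i, v j⟫ := by
  rw [← real_inner_self_eq_norm_sq, sum_inner]
  simp_rw [inner_sum, real_inner_smul_left, real_inner_smul_right, mul_assoc]

theorem abs_sum_sum_mul_mul_le {a : ι → ι → ℝ} {η : ℝ} (hη : 0 ≤ η)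
    (ha : ∀ i j, |a i j| ≤ η) (c : ι → ℝ) :
    |∑ i, ∑ j, c i * c j * a i j| ≤ Fintype.card ι * η * ∑ i, c i ^ 2 := by
  have hcauchy : (∑ i, |c i|) ^ 2 ≤ Fintype.card ι * ∑ i, c i ^ 2 := by
    simpa [sq_abs] using sq_sum_le_card_mul_sum_sq (s := univ) (f := fun i => |c i|)
  calc |∑ i, ∑ j, c i * c j * a i j|
      ≤ ∑ i, ∑ j, |c i| * |c j| * η := by
        refine (abs_sum_le_sum_abs _ _).trans (sum_le_sum fun i _ => ?_)
        refine (abs_sum_le_sum_abs _ _).trans (sum_le_sum fun j _ => ?_)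
        rw [abs_mul, abs_mul]
        exact mul_le_mul_of_nonneg_left (ha i j) (by positivity)
    _ = η * (∑ i, |c i|) ^ 2 := by
        rw [sq, sum_mul_sum, mul_sum]
        exact sum_congr rfl fun i _ => by rw [mul_sum]; exact sum_congr rfl fun j _ => by ring
    _ ≤ Fintype.card ι * η * ∑ i, c i ^ 2 := by nlinarith

variable [DecidableEq ι] {ξ : ι → E} {ε : ℝ}

theorem one_sub_card_mul_mul_sum_sq_le_norm_sq (hε : 0 ≤ ε)
    (hξ : ∀ i j, |⟪ξ i, ξ j⟫ - if i = j then (1 : ℝ) else 0| ≤ ε) (c : ι → ℝ) :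
    (1 - Fintype.card ι * ε) * ∑ i, c i ^ 2 ≤ ‖∑ i, c i • ξ i‖ ^ 2 := by
  have hsplit : ‖∑ i, c i • ξ i‖ ^ 2 = ∑ i, c i ^ 2
      + ∑ i, ∑ j, c i * c j * (⟪ξ i, ξ j⟫ - if i = j then (1 : ℝ) else 0) := by
    rw [norm_sum_smul_sq]
    simp only [mul_sub, sum_sub_distrib, mul_ite, mul_one, mul_zero, sum_ite_eq, mem_univ,
      if_true, sq]
    ring
  have herr := abs_le.mp (abs_sum_sum_mul_mul_le hε hξ c)
  linarith [herr.1]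

theorem linearIndependent_of_card_mul_lt_one (hε : 0 ≤ ε)
    (hξ : ∀ i j, |⟪ξ i, ξ j⟫ - if i = j then (1 : ℝ) else 0| ≤ ε)
    (hnε : Fintype.card ι * ε < 1) : LinearIndependent ℝ ξ := by
  refine Fintype.linearIndependent_iff.mpr fun c hc => ?_
  have hle := one_sub_card_mul_mul_sum_sq_le_norm_sq hε hξ c
  rw [hc, norm_zero, sq, mul_zero] at hle
  have hsum : ∑ i, c i ^ 2 = 0 :=
    le_antisymm (nonpos_of_mul_nonpos_right hle (by linarith)) (by positivity)
  intro i
  exact pow_eq_zero_iff two_ne_zero |>.mp <|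
    (sum_eq_zero_iff_of_nonneg fun j _ => sq_nonneg (c j)).mp hsum i (mem_univ i)

theorem one_sub_card_mul_mul_abs_norm_map_sq_sub_le [FiniteDimensional ℝ E] {δ : ℝ}
    (hcard : Fintype.card ι = finrank ℝ E) (hε : 0 ≤ ε)
    (hξ : ∀ i j, |⟪ξ i, ξ j⟫ - if i = j then (1 : ℝ) else 0| ≤ ε)
    (hnε : Fintype.card ι * ε < 1) (hδ : 0 ≤ δ) (L : E →ₗ[ℝ] F)
    (hL : ∀ i j, |⟪L (ξ i), L (ξ j)⟫ - ⟪ξ i, ξ j⟫| ≤ δ) (v : E) :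
    (1 - Fintype.card ι * ε) * |‖L v‖ ^ 2 - ‖v‖ ^ 2| ≤ Fintype.card ι * δ * ‖v‖ ^ 2 := by
  let b := basisOfLinearIndependentOfCardEqFinrank'
    ξ (linearIndependent_of_card_mul_lt_one hε hξ hnε) hcard
  obtain ⟨c, rfl⟩ : ∃ c : ι → ℝ, ∑ i, c i • ξ i = v :=
    ⟨b.repr v, by simpa [b] using b.sum_repr v⟩
  have hdiff : ‖L (∑ i, c i • ξ i)‖ ^ 2 - ‖∑ i, c i • ξ i‖ ^ 2
      = ∑ i, ∑ j, c i * c j * (⟪L (ξ i), L (ξ j)⟫ - ⟪ξ i, ξ j⟫) := by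
    simp only [map_sum, map_smul, norm_sum_smul_sq, mul_sub, sum_sub_distrib]
  rw [hdiff]
  calc (1 - Fintype.card ι * ε) * |∑ i, ∑ j, c i * c j * (⟪L (ξ i), L (ξ j)⟫ - ⟪ξ i, ξ j⟫)|
      ≤ (1 - Fintype.card ι * ε) * (Fintype.card ι * δ * ∑ i, c i ^ 2) :=
        mul_le_mul_of_nonneg_left (abs_sum_sum_mul_mul_le hδ hL c) (by linarith)
    _ = Fintype.card ι * δ * ((1 - Fintype.card ι * ε) * ∑ i, c i ^ 2) := by ring
    _ ≤ Fintype.card ι * δ * ‖∑ i, c i • ξ i‖ ^ 2 :=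
        mul_le_mul_of_nonneg_left (one_sub_card_mul_mul_sum_sq_le_norm_sq hε hξ c)
          (by positivity)

end AlmostOrthonormal

section NearIsometry

variable {E F : Type*} [NormedAddCommGroup E] [InnerProductSpace ℝ E]
  [NormedAddCommGroup F] [InnerProductSpace ℝ F]

theorem Orthonormal.norm_sum_smul_sq {ι : Type*} [Fintype ι] [DecidableEq ι] {v : ι → E}
    (hv : Orthonormal ℝ v) (c : ι → ℝ) : ‖∑ i, c i • v i‖ ^ 2 = ∑ i, c i ^ 2 := by
  rw [← real_inner_self_eq_norm_sq, hv.inner_sum]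
  simp [sq]

theorem ContinuousLinearMap.opNorm_le_of_apply_orthonormalBasis {ι : Type*} [Fintype ι]
    [DecidableEq ι] {A : E →L[ℝ] F} (e : OrthonormalBasis ι ℝ E) {f : ι → F}
    (hf : Orthonormal ℝ f) {d : ι → ℝ} {η : ℝ} (hη : 0 ≤ η) (hd : ∀ i, |d i| ≤ η)
    (hA : ∀ i, A (e i) = d i • f i) : ‖A‖ ≤ η := by
  refine A.opNorm_le_bound hη fun v => ?_
  have hAv : A v = ∑ i, (⟪e i, v⟫ * d i) • f i := by
    conv_lhs => rw [← e.sum_repr' v]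
    simp only [map_sum, map_smul, hA, smul_smul]
  refine le_of_pow_le_pow_left₀ two_ne_zero (by positivity) ?_
  rw [hAv, hf.norm_sum_smul_sq, mul_pow, ← e.sum_sq_inner_right v, mul_sum]
  refine sum_le_sum fun i _ => ?_
  rw [mul_pow, mul_comm]
  exact mul_le_mul_of_nonneg_right (sq_le_sq' (abs_le.mp (hd i)).1 (abs_le.mp (hd i)).2)
    (sq_nonneg _)

variable [FiniteDimensional ℝ E] [CompleteSpace F]

theorem ContinuousLinearMap.exists_orthonormalBasis_inner_map_map (L : E →L[ℝ] F) :
    ∃ (e : OrthonormalBasis (Fin (finrank ℝ E)) ℝ E) (μ : Fin (finrank ℝ E) → ℝ),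
      ∀ i j, ⟪L (e i), L (e j)⟫ = if i = j then μ i else 0 := by
  have := FiniteDimensional.complete ℝ E
  have hT : ((ContinuousLinearMap.adjoint L).comp L : E →ₗ[ℝ] E).IsSymmetric := fun x y => by
    simp [ContinuousLinearMap.adjoint_inner_left, ContinuousLinearMap.adjoint_inner_right]
  refine ⟨hT.eigenvectorBasis rfl, hT.eigenvalues rfl, fun i j => ?_⟩
  have hTe := hT.apply_eigenvectorBasis rfl i
  simp only [ContinuousLinearMap.coe_comp, ContinuousLinearMap.coe_coe,
    Function.comp_apply, RCLike.ofReal_real_eq_id, id] at hTe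
  rw [← ContinuousLinearMap.adjoint_inner_left, hTe, real_inner_smul_left,
    orthonormal_iff_ite.mp (hT.eigenvectorBasis rfl).orthonormal]
  simp

theorem abs_sqrt_sub_one_le {μ : ℝ} (hμ : 0 ≤ μ) : |√μ - 1| ≤ |μ - 1| := by
  have hpos : 0 < √μ + 1 := by positivity
  calc |√μ - 1| ≤ |√μ - 1| * (√μ + 1) := le_mul_of_one_le_right (abs_nonneg _) (by simp)
    _ = |(√μ - 1) * (√μ + 1)| := by rw [abs_mul, abs_of_pos hpos]
    _ = |μ - 1| := by
        congr 1
        linear_combination Real.sq_sqrt hμ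

theorem ContinuousLinearMap.exists_linearIsometry_opNorm_sub_le (L : E →L[ℝ] F) {η : ℝ}
    (hη₀ : 0 ≤ η) (hη₁ : η < 1) (hL : ∀ v, |‖L v‖ ^ 2 - ‖v‖ ^ 2| ≤ η * ‖v‖ ^ 2) :
    ∃ Q : E →ₗᵢ[ℝ] F, ‖L - Q.toContinuousLinearMap‖ ≤ η := by
  obtain ⟨e, μ, he⟩ := L.exists_orthonormalBasis_inner_map_map
  have hμ : ∀ i, |μ i - 1| ≤ η := fun i => by
    have h := hL (e i)
    rw [e.orthonormal.1 i, ← real_inner_self_eq_norm_sq, he, if_pos rfl] at h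
    simpa using h
  have hμpos : ∀ i, 0 < μ i := fun i => by linarith [(abs_le.mp (hμ i)).1]
  let f : Fin (finrank ℝ E) → F := fun i => (√(μ i))⁻¹ • L (e i)
  have hfo : Orthonormal ℝ f := by
    refine orthonormal_iff_ite.mpr fun i j => ?_
    simp only [f, real_inner_smul_left, real_inner_smul_right, he]
    split_ifs with h
    · subst h
      rw [← mul_assoc, ← mul_inv, Real.mul_self_sqrt (hμpos i).le,
        inv_mul_cancel₀ (hμpos i).ne']
    · simp
  let Q₀ : E →ₗ[ℝ] F := e.toBasis.constr ℝ f
  have hQ₀ : ∀ i, Q₀ (e i) = f i := fun i => by simp [Q₀]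
  let Q := Q₀.isometryOfOrthonormal (v := e.toBasis) (by simp [e.orthonormal])
    (by convert hfo; ext i; simp [hQ₀])
  refine ⟨Q, ContinuousLinearMap.opNorm_le_of_apply_orthonormalBasis e hfo hη₀
    (d := fun i => √(μ i) - 1) (fun i => (abs_sqrt_sub_one_le (hμpos i).le).trans (hμ i))
    fun i => ?_⟩
  have hQe : Q (e i) = f i :=
    (congrFun (LinearMap.coe_isometryOfOrthonormal _ _ _) (e i)).trans (hQ₀ i)
  simp only [sub_apply, LinearIsometry.coe_toContinuousLinearMap, hQe, f, smul_smul]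
  rw [sub_mul, mul_inv_cancel₀ (Real.sqrt_pos.mpr (hμpos i)).ne', one_mul, sub_smul, one_smul]

end NearIsometry

theorem stmt2 (n : ℕ) (hn : 0 < n) (ε δ : ℝ) (hε : 0 < ε) (hεn : ε < 1 / (2 * n))
    (hδ : 0 < δ) (hδn : 8 * n * Real.sqrt n * δ < 1)
    (ξ : Fin n → EuclideanSpace ℝ (Fin n))
    (horth : ∀ i j, |⟪ξ i, ξ j⟫ - (if i = j then (1:ℝ) else 0)| < ε)
    (L : EuclideanSpace ℝ (Fin n) →L[ℝ] EuclideanSpace ℝ (Fin n))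
    (hL : ∀ i j, |⟪L (ξ i), L (ξ j)⟫ - ⟪ξ i, ξ j⟫| < δ) :
    ∃ Q : EuclideanSpace ℝ (Fin n) →ₗᵢ[ℝ] EuclideanSpace ℝ (Fin n),
      ‖L - Q.toContinuousLinearMap‖ < 8 * n * Real.sqrt n * δ := by
  have hnε : (n : ℝ) * ε ≤ 1 / 2 := by
    rw [lt_div_iff₀ (by positivity)] at hεn
    linarith
  have hquad : ∀ v, |‖L v‖ ^ 2 - ‖v‖ ^ 2| ≤ 2 * n * δ * ‖v‖ ^ 2 := fun v => by
    have h := one_sub_card_mul_mul_abs_norm_map_sq_sub_le (by simp) hε.le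
      (fun i j => (horth i j).le) (by simp only [Fintype.card_fin]; linarith) hδ.le
      L.toLinearMap (fun i j => (hL i j).le) v
    simp only [Fintype.card_fin, ContinuousLinearMap.coe_coe] at h
    nlinarith [abs_nonneg (‖L v‖ ^ 2 - ‖v‖ ^ 2)]
  have h2nδ : 2 * n * δ < 8 * n * √n * δ := by
    have hsqrt : 1 ≤ √(n : ℝ) := Real.one_le_sqrt.mpr (by exact_mod_cast hn)
    have : (0 : ℝ) < n * δ := mul_pos (by exact_mod_cast hn) hδ
    nlinarith
  obtain ⟨Q, hQ⟩ := L.exists_linearIsometry_opNorm_sub_le (by positivity) (h2nδ.trans hδn) hquad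
  exact ⟨Q, hQ.trans_lt h2nδ⟩
end

section
/- Let J : [0,1] → ℝⁿ satisfy ‖J''(t)‖ ≤ δ‖J(t)‖ with J(0) = 0 and J(1) = a, and suppose ‖J(t)‖ ≤ 2‖a‖ on [0,1] and δ ≤ 10⁻². Then |⟨J(1), J'(1)⟩ − ‖a‖²| ≤ Cδ‖a‖² for an absolute constant C. -/
open Set
open scoped RealInnerProductSpace

/-!
The curve `g t = J t - t • J' t` has derivative `-t • J'' t`, whose norm is at most
`δ ‖J t‖ ≤ 2δ‖a‖`; the mean value inequality on `[0, 1]` then gives `‖J' 1 - a‖ ≤ 2δ‖a‖`,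
and `⟪a, J' 1⟫ - ‖a‖² = ⟪a, J' 1 - a⟫` is bounded by Cauchy–Schwarz. So `C = 2` works.
-/

theorem norm_sub_sub_smul_deriv_le {E : Type*} [NormedAddCommGroup E] [NormedSpace ℝ E]
    {f f' f'' : ℝ → E} {a b M : ℝ} (hab : a ≤ b)
    (hf : ∀ t ∈ Icc a b, HasDerivWithinAt f (f' t) (Icc a b) t)
    (hf' : ∀ t ∈ Icc a b, HasDerivWithinAt f' (f'' t) (Icc a b) t)
    (hM : ∀ t ∈ Icc a b, ‖f'' t‖ ≤ M) :
    ‖f b - f a - (b - a) • f' b‖ ≤ M * (b - a) ^ 2 := by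
  set g : ℝ → E := fun t => f t - (t - a) • f' t
  have hg : ∀ t ∈ Icc a b, HasDerivWithinAt g (-((t - a) • f'' t)) (Icc a b) t := by
    intro t ht
    refine ((hf t ht).sub (((hasDerivWithinAt_id t _).sub_const a).smul (hf' t ht))).congr_deriv ?_
    simp only [id_eq, one_smul]
    abel
  have hg_bound : ∀ t ∈ Icc a b, ‖-((t - a) • f'' t)‖ ≤ M * (b - a) := by
    intro t ht
    rw [norm_neg, norm_smul, Real.norm_of_nonneg (sub_nonneg.2 ht.1), mul_comm]
    exact mul_le_mul (hM t ht) (by linarith [ht.2]) (sub_nonneg.2 ht.1)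
      ((norm_nonneg _).trans (hM t ht))
  have key := (convex_Icc a b).norm_image_sub_le_of_norm_hasDerivWithin_le hg hg_bound
    (left_mem_Icc.2 hab) (right_mem_Icc.2 hab)
  have hga : g b - g a = f b - f a - (b - a) • f' b := by simp only [g, sub_self, zero_smul]; abel
  rwa [hga, Real.norm_of_nonneg (sub_nonneg.2 hab), mul_assoc, ← sq] at key

theorem abs_inner_sub_norm_sq_le {F : Type*} [NormedAddCommGroup F] [InnerProductSpace ℝ F]
    (x y : F) : |⟪x, y⟫ - ‖x‖ ^ 2| ≤ ‖x‖ * ‖y - x‖ := by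
  rw [← real_inner_self_eq_norm_sq, ← inner_sub_right]
  exact abs_real_inner_le_norm x (y - x)

theorem stmt18 :
    ∃ C > (0:ℝ), ∀ (n : ℕ) (δ : ℝ), 0 < δ → δ ≤ 1 / 100 →
      ∀ (a : EuclideanSpace ℝ (Fin n)) (J J' J'' : ℝ → EuclideanSpace ℝ (Fin n)),
        (∀ t ∈ Icc (0:ℝ) 1, HasDerivAt J (J' t) t) →
        (∀ t ∈ Icc (0:ℝ) 1, HasDerivAt J' (J'' t) t) →
        (∀ t ∈ Icc (0:ℝ) 1, ‖J'' t‖ ≤ δ * ‖J t‖) →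
        J 0 = 0 → J 1 = a →
        (∀ t ∈ Icc (0:ℝ) 1, ‖J t‖ ≤ 2 * ‖a‖) →
        |⟪J 1, J' 1⟫ - ‖a‖ ^ 2| ≤ C * δ * ‖a‖ ^ 2 := by
  refine ⟨2, two_pos, fun n δ hδ _ a J J' J'' hJ hJ' hJ'' h0 h1 hbd => ?_⟩
  have hJ''_bound : ∀ t ∈ Icc (0:ℝ) 1, ‖J'' t‖ ≤ 2 * δ * ‖a‖ := fun t ht =>
    (hJ'' t ht).trans (by nlinarith [hbd t ht])
  have hJ'1 : ‖J' 1 - a‖ ≤ 2 * δ * ‖a‖ := by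
    have := norm_sub_sub_smul_deriv_le zero_le_one (fun t ht => (hJ t ht).hasDerivWithinAt)
      (fun t ht => (hJ' t ht).hasDerivWithinAt) hJ''_bound
    rwa [h0, h1, sub_zero, sub_zero, one_smul, one_pow, mul_one, norm_sub_rev] at this
  calc |⟪J 1, J' 1⟫ - ‖a‖ ^ 2| ≤ ‖a‖ * ‖J' 1 - a‖ := h1 ▸ abs_inner_sub_norm_sq_le _ _
    _ ≤ ‖a‖ * (2 * δ * ‖a‖) := by gcongr
    _ = 2 * δ * ‖a‖ ^ 2 := by ring
end
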